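/- Let L be a subspace of ℂ^{𝔽₂^D} invariant under both 𝐀 and 𝐀*. Then L ∩ ℂ^X is invariant under both 𝐀₂ and 𝐀*, where ℂ^X denotes the subspace of functions supported on the set X of even-Hamming-weight vectors and 𝐀₂ is the matrix with (𝐀₂)_{yz} = 1 if w(y−z) = 2 and 0 otherwise. -/

import Mathlib

/-!
Two steps along edges of the cube either return to the start (in `D` ways) or reach a vertex at
distance two (in exactly two ways), so `𝐀² = D • 1 + 2 • 𝐀₂` and `𝐀₂` is a polynomial in `𝐀`,
hence preserves `L`. Both `𝐀₂` and the diagonal `𝐀*` only connect vertices at even distance,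
which have the same weight parity, so they also preserve `ℂ^X`.
-/

open Matrix

/-- Vertex set of the hypercube `H(D,2)`: binary words of length `D`. -/
abbrev Vtx (D : ℕ) := Fin D → ZMod 2

/-- Adjacency matrix of the hypercube `H(D,2)`. -/
noncomputable def adjCube (D : ℕ) : Matrix (Vtx D) (Vtx D) ℂ :=
  fun y z => if hammingNorm (y - z) = 1 then 1 else 0

/-- The `i`-th distance matrix of the hypercube `H(D,2)`. -/
noncomputable def distCube (D i : ℕ) : Matrix (Vtx D) (Vtx D) ℂ :=
  fun y z => if hammingNorm (y - z) = i then 1 else 0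

/-- Dual adjacency matrix of the hypercube with respect to `x₀`. -/
noncomputable def dualCube (D : ℕ) (x₀ : Vtx D) : Matrix (Vtx D) (Vtx D) ℂ :=
  Matrix.diagonal fun y => (D : ℂ) - 2 * hammingNorm (x₀ - y)

/-- The subspace `ℂ^X` of `ℂ^{𝔽₂^D}`: functions supported on vectors of even
Hamming weight. -/
noncomputable def evenSupp (D : ℕ) : Submodule ℂ (Vtx D → ℂ) where
  carrier := {f | ∀ y : Vtx D, ¬ Even (hammingNorm y) → f y = 0}
  add_mem' := by
    intro a b ha hb y hy
    simp [ha y hy, hb y hy]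
  zero_mem' := by
    intro y hy
    rfl
  smul_mem' := by
    intro c f hf y hy
    simp [hf y hy]

/-- The subspace `ℂ^{𝔽₂^D∖X}` of `ℂ^{𝔽₂^D}`: functions supported on vectors of odd
Hamming weight. -/
noncomputable def oddSupp (D : ℕ) : Submodule ℂ (Vtx D → ℂ) where
  carrier := {f | ∀ y : Vtx D, Even (hammingNorm y) → f y = 0}
  add_mem' := by
    intro a b ha hb y hy
    simp [ha y hy, hb y hy]
  zero_mem' := by
    intro y hy
    rfl
  smul_mem' := by
    intro c f hf y hy
    simp [hf y hy]

open Finset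

section ZModTwoVectors

variable {ι : Type*}

lemma ZMod.eq_one_iff_ne_zero_mod_two {a : ZMod 2} : a = 1 ↔ a ≠ 0 := by
  revert a; decide

lemma ZMod.add_one_eq_zero_iff_ne_zero_mod_two {a : ZMod 2} : a + 1 = 0 ↔ a ≠ 0 := by
  revert a; decide

lemma neg_eq_self_of_zmod_two (x : ι → ZMod 2) : -x = x :=
  funext fun i => ZMod.neg_eq_self_mod_two (x i)

variable [Fintype ι]

lemma natCast_hammingNorm_zmod_two (x : ι → ZMod 2) : (hammingNorm x : ZMod 2) = ∑ i, x i :=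
  calc (hammingNorm x : ZMod 2) = ∑ i with x i ≠ 0, 1 := cast_card _
    _ = ∑ i with x i ≠ 0, x i :=
      sum_congr rfl fun _ hi => (ZMod.eq_one_iff_ne_zero_mod_two.mpr (mem_filter.mp hi).2).symm
    _ = ∑ i, x i := sum_filter_ne_zero _

lemma even_hammingNorm_iff_of_even_sub {y z : ι → ZMod 2} (h : Even (hammingNorm (y - z))) :
    Even (hammingNorm y) ↔ Even (hammingNorm z) := by
  rw [← ZMod.natCast_eq_zero_iff_even, natCast_hammingNorm_zmod_two] at h
  simp only [Pi.sub_apply, sum_sub_distrib, sub_eq_zero] at h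
  rw [← ZMod.natCast_eq_zero_iff_even, ← ZMod.natCast_eq_zero_iff_even,
    natCast_hammingNorm_zmod_two, natCast_hammingNorm_zmod_two, h]

variable [DecidableEq ι]

lemma hammingNorm_add_single (x : ι → ZMod 2) (i : ι) :
    hammingNorm (x + Pi.single i 1) =
      if x i = 0 then hammingNorm x + 1 else hammingNorm x - 1 := by
  unfold hammingNorm
  split_ifs with hxi
  · have hins : univ.filter (fun j => (x + Pi.single i 1 : ι → ZMod 2) j ≠ 0) =
        insert i (univ.filter fun j => x j ≠ 0) := by
      ext j
      by_cases hj : j = i <;> simp_all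
    rw [hins, card_insert_of_notMem (by simp [hxi])]
  · have hers : univ.filter (fun j => (x + Pi.single i 1 : ι → ZMod 2) j ≠ 0) =
        (univ.filter fun j => x j ≠ 0).erase i := by
      ext j
      by_cases hj : j = i <;> simp_all [ZMod.add_one_eq_zero_iff_ne_zero_mod_two]
    rw [hers, card_erase_of_mem (by simp [hxi])]

lemma hammingNorm_eq_one_iff {s : ι → ZMod 2} : hammingNorm s = 1 ↔ ∃ i, s = Pi.single i 1 := by
  constructor
  · intro hs
    obtain ⟨i, hi⟩ : ∃ i, s i ≠ 0 := Function.ne_iff.mp (hammingNorm_ne_zero_iff.mp (by omega))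
    refine ⟨i, ?_⟩
    have : hammingNorm (s + Pi.single i 1) = 0 := by
      rw [hammingNorm_add_single, if_neg hi, hs]
    rw [hammingNorm_eq_zero] at this
    rw [eq_neg_of_add_eq_zero_left this, neg_eq_self_of_zmod_two]
  · rintro ⟨i, rfl⟩
    simpa using hammingNorm_add_single 0 i

lemma sum_hammingNorm_eq_one {M : Type*} [AddCommMonoid M] (f : (ι → ZMod 2) → M) :
    ∑ s with hammingNorm s = 1, f s = ∑ i, f (Pi.single i 1) := by
  have himage : ({s | hammingNorm s = 1} : Finset (ι → ZMod 2)) = univ.image (Pi.single · 1) := by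
    ext s
    simp only [mem_filter, mem_univ, true_and, mem_image, hammingNorm_eq_one_iff]
    exact exists_congr fun i => eq_comm
  rw [himage, sum_image fun i _ j _ h => by
    by_contra hij
    simpa [hij] using congr_fun h i]

lemma card_filter_hammingNorm_add_single_eq_one (x : ι → ZMod 2) :
    #{i | hammingNorm (x + Pi.single i 1) = 1} =
      if x = 0 then Fintype.card ι else if hammingNorm x = 2 then 2 else 0 := by
  simp only [hammingNorm_add_single]
  split_ifs with h0 h2
  · subst h0
    simp
  · refine (congrArg card (filter_congr fun i _ => ?_)).trans h2
    by_cases hxi : x i = 0 <;> simp [hxi, h2]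
  · have hx : hammingNorm x ≠ 0 := hammingNorm_ne_zero_iff.mpr h0
    rw [card_eq_zero, filter_eq_empty_iff]
    intro i _
    split_ifs <;> omega

end ZModTwoVectors

variable {D : ℕ}

lemma adjCube_mulVec_apply (v : Vtx D → ℂ) (y : Vtx D) :
    (adjCube D *ᵥ v) y = ∑ i, v (y + Pi.single i 1) := by
  calc (adjCube D *ᵥ v) y = ∑ s, adjCube D y (y + s) * v (y + s) :=
        (Fintype.sum_equiv (Equiv.addLeft y) _ _ fun _ => rfl).symm
    _ = ∑ s with hammingNorm s = 1, v (y + s) := by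
        rw [sum_filter]
        refine sum_congr rfl fun s _ => ?_
        rw [adjCube, sub_add_cancel_left, neg_eq_self_of_zmod_two, ite_mul, one_mul, zero_mul]
    _ = ∑ i, v (y + Pi.single i 1) := sum_hammingNorm_eq_one (fun s => v (y + s))

lemma adjCube_mul_self : adjCube D * adjCube D = (D : ℂ) • 1 + (2 : ℂ) • distCube D 2 := by
  ext y z
  have hcol : (adjCube D * adjCube D) y z = (adjCube D *ᵥ fun w => adjCube D w z) y := rfl
  rw [hcol, adjCube_mulVec_apply]
  simp only [adjCube, add_sub_right_comm, sum_boole, card_filter_hammingNorm_add_single_eq_one]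
  simp only [Matrix.add_apply, Matrix.smul_apply, one_apply, distCube, ← sub_eq_zero (a := y),
    Fintype.card_fin]
  split_ifs <;> simp_all

lemma distCube_two_mulVec (v : Vtx D → ℂ) :
    distCube D 2 *ᵥ v = (2 : ℂ)⁻¹ • (adjCube D *ᵥ (adjCube D *ᵥ v) - (D : ℂ) • v) := by
  rw [mulVec_mulVec, adjCube_mul_self, add_mulVec, smul_mulVec, smul_mulVec, one_mulVec]
  module

lemma mulVec_mem_evenSupp {M : Matrix (Vtx D) (Vtx D) ℂ}
    (hM : ∀ y z, M y z ≠ 0 → Even (hammingNorm (y - z))) {v : Vtx D → ℂ} (hv : v ∈ evenSupp D) :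
    M *ᵥ v ∈ evenSupp D := by
  intro y hy
  refine sum_eq_zero fun z _ => ?_
  by_cases hyz : M y z = 0
  · simp [hyz]
  · simp [hv z fun hz => hy ((even_hammingNorm_iff_of_even_sub (hM y z hyz)).mpr hz)]

lemma distCube_mulVec_mem_evenSupp {n : ℕ} (hn : Even n) {v : Vtx D → ℂ} (hv : v ∈ evenSupp D) :
    distCube D n *ᵥ v ∈ evenSupp D :=
  mulVec_mem_evenSupp (fun y z h => by
    simp only [distCube, ne_eq, ite_eq_right_iff, not_forall] at h
    exact h.1 ▸ hn) hv

lemma dualCube_mulVec_mem_evenSupp (x₀ : Vtx D) {v : Vtx D → ℂ} (hv : v ∈ evenSupp D) :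
    dualCube D x₀ *ᵥ v ∈ evenSupp D :=
  mulVec_mem_evenSupp (fun y z h => by
    obtain rfl : y = z := by
      by_contra hyz
      exact h (diagonal_apply_ne _ hyz)
    simp) hv

theorem stmt14_general (D : ℕ) (x₀ : Vtx D)
    (L : Submodule ℂ (Vtx D → ℂ))
    (hLA : ∀ v ∈ L, (adjCube D).mulVec v ∈ L)
    (hLA' : ∀ v ∈ L, (dualCube D x₀).mulVec v ∈ L) :
    (∀ v ∈ L ⊓ evenSupp D, (distCube D 2).mulVec v ∈ L ⊓ evenSupp D) ∧
    (∀ v ∈ L ⊓ evenSupp D, (dualCube D x₀).mulVec v ∈ L ⊓ evenSupp D) := by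
  constructor
  · rintro v ⟨hvL, hvE⟩
    refine ⟨?_, distCube_mulVec_mem_evenSupp even_two hvE⟩
    rw [distCube_two_mulVec]
    exact L.smul_mem _ (L.sub_mem (hLA _ (hLA v hvL)) (L.smul_mem _ hvL))
  · rintro v ⟨hvL, hvE⟩
    exact ⟨hLA' v hvL, dualCube_mulVec_mem_evenSupp x₀ hvE⟩

theorem stmt14 (D : ℕ) (hD : 3 ≤ D) (x₀ : Vtx D) (hx₀ : Even (hammingNorm x₀))
    (L : Submodule ℂ (Vtx D → ℂ))
    (hLA : ∀ v ∈ L, (adjCube D).mulVec v ∈ L)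
    (hLA' : ∀ v ∈ L, (dualCube D x₀).mulVec v ∈ L) :
    (∀ v ∈ L ⊓ evenSupp D, (distCube D 2).mulVec v ∈ L ⊓ evenSupp D) ∧
    (∀ v ∈ L ⊓ evenSupp D, (dualCube D x₀).mulVec v ∈ L ⊓ evenSupp D) :=
  stmt14_general D x₀ L hLA hLA'
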